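/- Assume m1 ≥ 1. Let a = (a_1,…,a_m), b = (b_1,…,b_m) ∈ F^m be such that b_{j0} ≠ 0 for some j0 ∈ {1,…,m1}, and such that if m2 < m then a_{i0} ≠ 0 for some i0 ∈ {m2+1,…,m}. Then for every c ∈ F, the only F-linear subspaces of A invariant under every operator of the twisted family Π^{a,b}(c;m1,m2) are {0} and A. -/

import Mathlib

open MvPolynomial

/-- The index set of the variables `x_0,x_1,…,x_m,y_1,…,y_m`:
`Sum.inl i` is `x_i` (`i = 0,…,m`) and `Sum.inr i` is `y_{i+1}` (`i = 0,…,m-1`). -/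
abbrev SpIdx (m : ℕ) := Fin (m + 1) ⊕ Fin m

/-- Multiplication by `x_i` (`i = 0,…,m`). -/
noncomputable def mx (F : Type*) [Field F] (m : ℕ) (i : Fin (m + 1)) :
    Module.End F (MvPolynomial (SpIdx m) F) :=
  LinearMap.mulLeft F (X (Sum.inl i))

/-- Multiplication by `y_{i+1}` (`i : Fin m`). -/
noncomputable def my (F : Type*) [Field F] (m : ℕ) (i : Fin m) :
    Module.End F (MvPolynomial (SpIdx m) F) :=
  LinearMap.mulLeft F (X (Sum.inr i))

/-- The partial derivative `∂_{x_i}`. -/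
noncomputable def dx (F : Type*) [Field F] (m : ℕ) (i : Fin (m + 1)) :
    Module.End F (MvPolynomial (SpIdx m) F) :=
  (pderiv (Sum.inl i)).toLinearMap

/-- The partial derivative `∂_{y_{i+1}}`. -/
noncomputable def dy (F : Type*) [Field F] (m : ℕ) (i : Fin m) :
    Module.End F (MvPolynomial (SpIdx m) F) :=
  (pderiv (Sum.inr i)).toLinearMap

/-- The twisted derivative `∂'_{x_{i+1}} = ∂_{x_{i+1}} + a_i·id` (`i : Fin m`);
`∂_{x_0}` is left unchanged. -/
noncomputable def dxs (F : Type*) [Field F] (m : ℕ) (a : Fin m → F) (i : Fin m) :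
    Module.End F (MvPolynomial (SpIdx m) F) :=
  dx F m i.succ + a i • 1

/-- The twisted derivative `∂'_{y_{i+1}} = ∂_{y_{i+1}} + b_i·id` (`i : Fin m`). -/
noncomputable def dys (F : Type*) [Field F] (m : ℕ) (b : Fin m → F) (i : Fin m) :
    Module.End F (MvPolynomial (SpIdx m) F) :=
  dy F m i + b i • 1

/-- The twisted operator `D̃' = x_0∂_{x_0} + Σ_{r>m1} x_r∘∂'_{x_r} − Σ_{i≤m1} x_i∘∂'_{x_i}
 + Σ_{i≤m2} y_i∘∂'_{y_i} − Σ_{r>m2} y_r∘∂'_{y_r}`. -/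
noncomputable def DtSpA (F : Type*) [Field F] (m m1 m2 : ℕ) (a b : Fin m → F) :
    Module.End F (MvPolynomial (SpIdx m) F) :=
  mx F m 0 * dx F m 0 +
    ∑ i : Fin m,
      (if (i : ℕ) < m1 then -(mx F m i.succ * dxs F m a i)
        else mx F m i.succ * dxs F m a i) +
    ∑ i : Fin m,
      (if (i : ℕ) < m2 then my F m i * dys F m b i else -(my F m i * dys F m b i))

/-- `c̃ = c + m2 − m1 − m`. -/
def ct (F : Type*) [Field F] (m m1 m2 : ℕ) (c : F) : F :=
  c + (m2 : F) - (m1 : F) - (m : F)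

/-- The `a,b`-twisted operators `Ex_{i,j}`. -/
noncomputable def ExA (F : Type*) [Field F] (m m1 : ℕ) (a : Fin m → F) (i j : Fin m) :
    Module.End F (MvPolynomial (SpIdx m) F) :=
  if (i : ℕ) < m1 then
    if (j : ℕ) < m1 then
      -(mx F m j.succ * dxs F m a i) - (if i = j then 1 else 0)
    else dxs F m a i * dxs F m a j
  else
    if (j : ℕ) < m1 then -(mx F m i.succ * mx F m j.succ)
    else mx F m i.succ * dxs F m a j

/-- The `a,b`-twisted operators `Ey_{i,j}`. -/
noncomputable def EyA (F : Type*) [Field F] (m m2 : ℕ) (b : Fin m → F) (i j : Fin m) :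
    Module.End F (MvPolynomial (SpIdx m) F) :=
  if (i : ℕ) < m2 then
    if (j : ℕ) < m2 then my F m i * dys F m b j
    else -(my F m i * my F m j)
  else
    if (j : ℕ) < m2 then dys F m b i * dys F m b j
    else -(my F m j * dys F m b i) - (if i = j then 1 else 0)

/-- The `a,b`-twisted operators `Fo_{i,j}`. -/
noncomputable def FoA (F : Type*) [Field F] (m m1 m2 : ℕ) (a b : Fin m → F) (i j : Fin m) :
    Module.End F (MvPolynomial (SpIdx m) F) :=
  if (i : ℕ) < m1 then
    if (j : ℕ) < m2 then dxs F m a i * dys F m b j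
    else -(my F m j * dxs F m a i)
  else
    if (j : ℕ) < m2 then mx F m i.succ * dys F m b j
    else -(mx F m i.succ * my F m j)

/-- The `a,b`-twisted operators `Go_{i,j}`. -/
noncomputable def GoA (F : Type*) [Field F] (m m1 m2 : ℕ) (a b : Fin m → F) (i j : Fin m) :
    Module.End F (MvPolynomial (SpIdx m) F) :=
  if (j : ℕ) < m1 then
    if (i : ℕ) < m2 then -(mx F m j.succ * my F m i)
    else -(mx F m j.succ * dys F m b i)
  else
    if (i : ℕ) < m2 then my F m i * dxs F m a j
    else dxs F m a j * dys F m b i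

/-- The `a,b`-twisted operators `R_i`. -/
noncomputable def RspA (F : Type*) [Field F] (m m1 m2 : ℕ) (a b : Fin m → F) (i : Fin m) :
    Module.End F (MvPolynomial (SpIdx m) F) :=
  if (i : ℕ) < m1 then dx F m 0 * dxs F m a i + dys F m b i
  else if (i : ℕ) < m2 then mx F m i.succ * dx F m 0 + dys F m b i
  else mx F m i.succ * dx F m 0 - my F m i

/-- The `a,b`-twisted operators `S_i`. -/
noncomputable def SspA (F : Type*) [Field F] (m m1 m2 : ℕ) (a b : Fin m → F) (i : Fin m) :
    Module.End F (MvPolynomial (SpIdx m) F) :=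
  if (i : ℕ) < m1 then my F m i * dx F m 0 + mx F m i.succ
  else if (i : ℕ) < m2 then my F m i * dx F m 0 - dxs F m a i
  else dx F m 0 * dys F m b i - dxs F m a i

/-- The `a,b`-twisted operators `W_i`. -/
noncomputable def WspA (F : Type*) [Field F] (m m1 m2 : ℕ) (a b : Fin m → F) (c : F)
    (i : Fin m) : Module.End F (MvPolynomial (SpIdx m) F) :=
  if (i : ℕ) < m1 then
    -(mx F m 0 * mx F m i.succ)
      - my F m i * (DtSpA F m m1 m2 a b + ct F m m1 m2 c • 1)
  else if (i : ℕ) < m2 then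
    mx F m 0 * dxs F m a i - my F m i * (DtSpA F m m1 m2 a b + ct F m m1 m2 c • 1)
  else
    mx F m 0 * dxs F m a i
      - (DtSpA F m m1 m2 a b + (ct F m m1 m2 c - 1) • 1) * dys F m b i

/-- The `a,b`-twisted operators `Z_i`. -/
noncomputable def ZspA (F : Type*) [Field F] (m m1 m2 : ℕ) (a b : Fin m → F) (c : F)
    (i : Fin m) : Module.End F (MvPolynomial (SpIdx m) F) :=
  if (i : ℕ) < m1 then
    mx F m 0 * dys F m b i
      + (DtSpA F m m1 m2 a b + (ct F m m1 m2 c - 1) • 1) * dxs F m a i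
  else if (i : ℕ) < m2 then
    mx F m 0 * dys F m b i + mx F m i.succ * (DtSpA F m m1 m2 a b + ct F m m1 m2 c • 1)
  else
    -(mx F m 0 * my F m i) + mx F m i.succ * (DtSpA F m m1 m2 a b + ct F m m1 m2 c • 1)

/-- The twisted family `Π^{a,b}(c;m1,m2)`, realizing the representation `π_{c,S}` of
`sp(2m+2,F)` on `A·e^{Σ a_i x_i + Σ b_i y_i}`, transported to `A`. -/
noncomputable def FamTA (F : Type*) [Field F] (m m1 m2 : ℕ) (a b : Fin m → F) (c : F) :
    Set (Module.End F (MvPolynomial (SpIdx m) F)) :=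
  {T | (∃ i j : Fin m, T = ExA F m m1 a i j - EyA F m m2 b j i) ∨
       (∃ i j : Fin m, T = FoA F m m1 m2 a b i j + FoA F m m1 m2 a b j i) ∨
       (∃ i j : Fin m, T = GoA F m m1 m2 a b i j + GoA F m m1 m2 a b j i) ∨
       T = -dx F m 0 ∨
       T = mx F m 0 * (DtSpA F m m1 m2 a b + ct F m m1 m2 c • 1) ∨
       (∃ i : Fin m, T = RspA F m m1 m2 a b i) ∨
       (∃ i : Fin m, T = SspA F m m1 m2 a b i) ∨
       (∃ i : Fin m, T = WspA F m m1 m2 a b c i) ∨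
       (∃ i : Fin m, T = ZspA F m m1 m2 a b c i) ∨
       T = DtSpA F m m1 m2 a b + mx F m 0 * dx F m 0 + ct F m m1 m2 c • 1}

namespace Stmt16Aux
variable {F : Type*} [Field F] {σ : Type*} [DecidableEq σ]

theorem coeff_pderiv (i : σ) (f : MvPolynomial σ F) (u : σ →₀ ℕ) :
    coeff u (pderiv i f) = (u i + 1) • coeff (u + Finsupp.single i 1) f := by
  induction f using MvPolynomial.induction_on' with
  | monomial s c =>
    rw [pderiv_monomial]
    by_cases hs : s i = 0
    · rw [coeff_monomial, coeff_monomial]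
      have h2 : ¬ s = u + Finsupp.single i 1 := by
        intro h; rw [h] at hs; simp at hs
      rw [if_neg h2]
      split <;> simp [hs]
    · have hle : Finsupp.single i 1 ≤ s := by
        rw [Finsupp.single_le_iff]; omega
      rw [coeff_monomial, coeff_monomial]
      by_cases he : s - Finsupp.single i 1 = u
      · have he2 : s = u + Finsupp.single i 1 := by
          rw [← he]; rw [tsub_add_cancel_of_le hle]
        have : u i + 1 = s i := by
          rw [he2]; simp
        rw [if_pos he, if_pos he2]
        rw [nsmul_eq_mul, this, mul_comm]
      · have he2 : ¬ s = u + Finsupp.single i 1 := by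
          intro h
          apply he
          rw [h]; ext j; by_cases hj : j = i <;> simp [hj, Finsupp.single_apply]
        rw [if_neg he, if_neg he2]
        simp
  | add p q hp hq => simp [hp, hq, mul_add]

theorem coeff_ne_zero_of_pderiv {i : σ} {f : MvPolynomial σ F} {u : σ →₀ ℕ}
    (h : coeff u (pderiv i f) ≠ 0) : coeff (u + Finsupp.single i 1) f ≠ 0 := by
  rw [coeff_pderiv] at h
  intro h0; rw [h0] at h; simp at h

theorem pderiv_eq_zero_of_degreeOf_zero {i : σ} {f : MvPolynomial σ F}
    (h : degreeOf i f = 0) : pderiv i f = 0 := by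
  ext u
  rw [coeff_pderiv, coeff_zero]
  have : coeff (u + Finsupp.single i 1) f = 0 := by
    by_contra hc
    have := monomial_le_degreeOf i (by rwa [MvPolynomial.mem_support_iff] : _ ∈ f.support)
    rw [h] at this
    simp at this
  rw [this, smul_zero]

theorem degreeOf_pderiv_lt {i : σ} {f : MvPolynomial σ F}
    (h : degreeOf i f ≠ 0) : degreeOf i (pderiv i f) < degreeOf i f := by
  rw [degreeOf_lt_iff (Nat.pos_of_ne_zero h)]
  intro u hu
  rw [MvPolynomial.mem_support_iff] at hu
  have h2 := coeff_ne_zero_of_pderiv hu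
  have := monomial_le_degreeOf i (by rwa [MvPolynomial.mem_support_iff] : _ ∈ f.support)
  simp only [Finsupp.add_apply, Finsupp.single_eq_same] at this
  omega

theorem totalDegree_pderiv_lt {i : σ} {f : MvPolynomial σ F}
    (h : pderiv i f ≠ 0) : totalDegree (pderiv i f) < totalDegree f := by
  rw [totalDegree, Finset.sup_lt_iff]
  · intro u hu
    rw [MvPolynomial.mem_support_iff] at hu
    have h2 := coeff_ne_zero_of_pderiv hu
    have h3 : ((u + Finsupp.single i 1).sum fun _ e => e) ≤ totalDegree f :=
      le_totalDegree (by rwa [MvPolynomial.mem_support_iff])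
    have h4 : ((u + Finsupp.single i 1).sum fun _ e => e)
        = (u.sum fun _ e => e) + 1 := by
      rw [Finsupp.sum_add_index (by simp) (by intros; rfl)]
      simp
    omega
  · obtain ⟨u, hu⟩ := ne_zero_iff.mp h
    have h2 := coeff_ne_zero_of_pderiv hu
    have h3 : ((u + Finsupp.single i 1).sum fun _ e => e) ≤ totalDegree f :=
      le_totalDegree (by rwa [MvPolynomial.mem_support_iff])
    have h4 : 1 ≤ (u + Finsupp.single i 1).sum fun _ e => e := by
      rw [Finsupp.sum_add_index (by simp) (by intros; rfl)]
      simp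
    have hb : (⊥ : ℕ) = 0 := rfl
    omega

theorem eq_C_of_pderiv_eq_zero {f : MvPolynomial σ F}
    (h : ∀ z : σ, pderiv z f = 0) [CharZero F] : f = C (coeff 0 f) := by
  ext d
  rw [coeff_C]
  by_cases hd : d = 0
  · rw [if_pos hd.symm, hd]
  · rw [if_neg (fun hh => hd hh.symm)]
    have : ∃ z, d z ≠ 0 := by
      by_contra hc
      push_neg at hc
      exact hd (Finsupp.ext fun z => hc z)
    obtain ⟨z, hz⟩ := this
    have hle : Finsupp.single z 1 ≤ d := by rw [Finsupp.single_le_iff]; omega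
    have := coeff_pderiv z f ((d - Finsupp.single z 1 : σ →₀ ℕ))
    rw [h z, coeff_zero, tsub_add_cancel_of_le hle] at this
    have h6 := this.symm
    rw [nsmul_eq_mul, mul_eq_zero] at h6
    rcases h6 with h6 | h6
    · rw [Nat.cast_add, Nat.cast_one] at h6
      exact absurd h6 (Nat.cast_add_one_ne_zero _)
    · exact h6

variable (F)

/-- polynomials not involving the variable `i` -/
def freeOf (i : σ) : Submodule F (MvPolynomial σ F) where
  carrier := {g | ∀ d : σ →₀ ℕ, d i ≠ 0 → coeff d g = 0}
  add_mem' := by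
    intro p q hp hq d hd
    rw [coeff_add, hp d hd, hq d hd, add_zero]
  zero_mem' := by intro d hd; simp
  smul_mem' := by
    intro r p hp d hd
    rw [coeff_smul, hp d hd, smul_zero]

variable {F}

theorem pderiv_self_of_freeOf {i : σ} {g : MvPolynomial σ F} (h : g ∈ freeOf F i) :
    pderiv i g = 0 := by
  ext u
  rw [coeff_pderiv, coeff_zero, h _ (by simp), smul_zero]

theorem freeOf_of_pderiv [CharZero F] {i : σ} {g : MvPolynomial σ F}
    (h : pderiv i g = 0) : g ∈ freeOf F i := by
  intro d hd
  have hle : Finsupp.single i 1 ≤ d := by rw [Finsupp.single_le_iff]; omega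
  have := coeff_pderiv i g ((d - Finsupp.single i 1 : σ →₀ ℕ))
  rw [h, coeff_zero, tsub_add_cancel_of_le hle] at this
  have h6 := this.symm
  rw [nsmul_eq_mul, mul_eq_zero] at h6
  rcases h6 with h6 | h6
  · rw [Nat.cast_add, Nat.cast_one] at h6
    exact absurd h6 (Nat.cast_add_one_ne_zero _)
  · exact h6

theorem pderiv_mem_freeOf {i z : σ} {g : MvPolynomial σ F} (h : g ∈ freeOf F i) :
    pderiv z g ∈ freeOf F i := by
  intro d hd
  rw [coeff_pderiv]
  rw [h _ (by simp only [Finsupp.add_apply]; intro hc; exact hd (by omega)), smul_zero]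

theorem X_mul_mem_freeOf {i z : σ} (hz : z ≠ i) {g : MvPolynomial σ F} (h : g ∈ freeOf F i) :
    X z * g ∈ freeOf F i := by
  intro d hd
  rw [coeff_X_mul']
  split
  · rename_i hmem
    apply h
    simp only [Finsupp.tsub_apply, Finsupp.single_apply, if_neg hz]
    omega
  · rfl

theorem monomial_mem_freeOf {i : σ} {d : σ →₀ ℕ} (hd : d i = 0) (r : F) :
    monomial d r ∈ freeOf F i := by
  intro u hu
  rw [coeff_monomial]
  split
  · rename_i hh; rw [hh] at hd; exact absurd hd hu
  · rfl

theorem one_mem_freeOf (i : σ) : (1 : MvPolynomial σ F) ∈ freeOf F i := by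
  have : (1 : MvPolynomial σ F) = monomial 0 1 := by simp
  rw [this]
  exact monomial_mem_freeOf rfl 1

section SpecificAux
variable {F : Type*} [Field F] {m : ℕ}

/-- twisted `x`-derivative as a plain function -/
noncomputable def DX (a : Fin m → F) (i : Fin m) (f : MvPolynomial (SpIdx m) F) :
    MvPolynomial (SpIdx m) F :=
  pderiv (Sum.inl i.succ) f + a i • f

/-- twisted `y`-derivative as a plain function -/
noncomputable def DY (b : Fin m → F) (j : Fin m) (f : MvPolynomial (SpIdx m) F) :
    MvPolynomial (SpIdx m) F :=
  pderiv (Sum.inr j) f + b j • f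

theorem mx_apply (i : Fin (m+1)) (f : MvPolynomial (SpIdx m) F) :
    mx F m i f = X (Sum.inl i) * f := rfl

theorem my_apply (i : Fin m) (f : MvPolynomial (SpIdx m) F) :
    my F m i f = X (Sum.inr i) * f := rfl

theorem dx_apply (i : Fin (m+1)) (f : MvPolynomial (SpIdx m) F) :
    dx F m i f = pderiv (Sum.inl i) f := rfl

theorem dxs_apply (a : Fin m → F) (i : Fin m) (f : MvPolynomial (SpIdx m) F) :
    dxs F m a i f = DX a i f := by
  simp [dxs, dx, DX, LinearMap.add_apply, LinearMap.smul_apply, Module.End.one_apply]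

theorem dys_apply (b : Fin m → F) (j : Fin m) (f : MvPolynomial (SpIdx m) F) :
    dys F m b j f = DY b j f := by
  simp [dys, dy, DY, LinearMap.add_apply, LinearMap.smul_apply, Module.End.one_apply]

theorem DX_add (a : Fin m → F) (i : Fin m) (f g : MvPolynomial (SpIdx m) F) :
    DX a i (f + g) = DX a i f + DX a i g := by
  simp only [DX, map_add, smul_add]; abel

theorem DX_smul (a : Fin m → F) (i : Fin m) (r : F) (f : MvPolynomial (SpIdx m) F) :
    DX a i (r • f) = r • DX a i f := by
  simp only [DX, Derivation.map_smul, smul_comm r (a i), smul_add]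

theorem DY_add (b : Fin m → F) (j : Fin m) (f g : MvPolynomial (SpIdx m) F) :
    DY b j (f + g) = DY b j f + DY b j g := by
  simp only [DY, map_add, smul_add]; abel

theorem DY_smul (b : Fin m → F) (j : Fin m) (r : F) (f : MvPolynomial (SpIdx m) F) :
    DY b j (r • f) = r • DY b j f := by
  simp only [DY, Derivation.map_smul, smul_comm r (b j), smul_add]

theorem DX_zero (a : Fin m → F) (i : Fin m) : DX a i 0 = 0 := by simp [DX]

theorem DY_zero (b : Fin m → F) (j : Fin m) : DY b j 0 = 0 := by simp [DY]

theorem pderiv_pderiv_comm (z w : σ) (f : MvPolynomial σ F) :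
    pderiv z (pderiv w f) = pderiv w (pderiv z f) := by
  ext u
  rw [coeff_pderiv, coeff_pderiv, coeff_pderiv, coeff_pderiv]
  rw [add_right_comm u (Finsupp.single z 1) (Finsupp.single w 1)]
  rw [smul_smul, smul_smul]
  congr 1
  simp only [Finsupp.add_apply, Finsupp.single_apply]
  by_cases h : z = w
  · subst h; ring
  · rw [if_neg h, if_neg (Ne.symm h)]; ring

theorem DX_DY_comm (a b : Fin m → F) (i j : Fin m) (f : MvPolynomial (SpIdx m) F) :
    DX a i (DY b j f) = DY b j (DX a i f) := by
  simp only [DX, DY, map_add, Derivation.map_smul, smul_add, smul_comm (a i) (b j)]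
  rw [pderiv_pderiv_comm]
  abel

theorem DX_mem_freeOf {a : Fin m → F} {i : Fin m} {z : SpIdx m} {f : MvPolynomial (SpIdx m) F}
    (hf : f ∈ freeOf F z) : DX a i f ∈ freeOf F z :=
  Submodule.add_mem _ (pderiv_mem_freeOf hf) (Submodule.smul_mem _ _ hf)

theorem DY_mem_freeOf {b : Fin m → F} {j : Fin m} {z : SpIdx m} {f : MvPolynomial (SpIdx m) F}
    (hf : f ∈ freeOf F z) : DY b j f ∈ freeOf F z :=
  Submodule.add_mem _ (pderiv_mem_freeOf hf) (Submodule.smul_mem _ _ hf)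

theorem inl_succ_ne_zero (i : Fin m) : (Sum.inl i.succ : SpIdx m) ≠ Sum.inl 0 := by
  intro h
  apply Fin.succ_ne_zero i
  injection h

theorem inr_ne_zero (j : Fin m) : (Sum.inr j : SpIdx m) ≠ Sum.inl 0 := by
  intro h; cases h

theorem DY_sub (b : Fin m → F) (j : Fin m) (f g : MvPolynomial (SpIdx m) F) :
    DY b j (f - g) = DY b j f - DY b j g := by
  simp only [DY, map_sub, smul_sub]; abel

theorem pderiv_X0pow_mul (z : SpIdx m) (hz : z ≠ Sum.inl 0) (k : ℕ)
    (u : MvPolynomial (SpIdx m) F) :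
    pderiv z (X (Sum.inl 0) ^ k * u) = X (Sum.inl 0) ^ k * pderiv z u := by
  rw [pderiv_mul, pderiv_pow, pderiv_X_of_ne (Ne.symm hz), mul_zero, zero_mul, zero_add]

theorem DX_X0pow (a : Fin m → F) (i : Fin m) (k : ℕ) (u : MvPolynomial (SpIdx m) F) :
    DX a i (X (Sum.inl 0) ^ k * u) = X (Sum.inl 0) ^ k * DX a i u := by
  rw [DX, DX, pderiv_X0pow_mul _ (inl_succ_ne_zero i), mul_add, mul_smul_comm]

theorem DY_X0pow (b : Fin m → F) (j : Fin m) (k : ℕ) (u : MvPolynomial (SpIdx m) F) :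
    DY b j (X (Sum.inl 0) ^ k * u) = X (Sum.inl 0) ^ k * DY b j u := by
  rw [DY, DY, pderiv_X0pow_mul _ (inr_ne_zero j), mul_add, mul_smul_comm]

theorem X0_pderiv0_X0pow_mul (k : ℕ) {u : MvPolynomial (SpIdx m) F}
    (hu : pderiv (Sum.inl 0 : SpIdx m) u = 0) :
    X (Sum.inl 0) * pderiv (Sum.inl 0 : SpIdx m) (X (Sum.inl 0) ^ k * u)
      = (k : F) • (X (Sum.inl 0) ^ k * u) := by
  rw [pderiv_mul, hu, mul_zero, add_zero, pderiv_pow, pderiv_X_self, mul_one]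
  cases k with
  | zero => simp
  | succ k =>
    rw [smul_eq_C_mul]
    have hC : (C ((k+1 : ℕ) : F) : MvPolynomial (SpIdx m) F) = ((k+1 : ℕ) : MvPolynomial (SpIdx m) F) := by
      push_cast
      simp
    rw [hC]
    have : (k + 1 - 1 : ℕ) = k := rfl
    rw [this]
    ring

theorem DtSpA_mem_freeOf (m1 m2 : ℕ) (a b : Fin m → F) {u : MvPolynomial (SpIdx m) F}
    (hu : u ∈ freeOf F (Sum.inl 0)) :
    DtSpA F m m1 m2 a b u ∈ freeOf F (Sum.inl 0) := by
  simp only [DtSpA, LinearMap.add_apply, LinearMap.sum_apply]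
  refine Submodule.add_mem _ (Submodule.add_mem _ ?_ (Submodule.sum_mem _ ?_))
    (Submodule.sum_mem _ ?_)
  · rw [Module.End.mul_apply, dx_apply, pderiv_self_of_freeOf hu, mx_apply, mul_zero]
    exact Submodule.zero_mem _
  · intro i _
    rw [apply_ite (fun (T : Module.End F (MvPolynomial (SpIdx m) F)) => T u)]
    split
    · rw [LinearMap.neg_apply, Module.End.mul_apply, mx_apply, dxs_apply]
      exact Submodule.neg_mem _
        (X_mul_mem_freeOf (inl_succ_ne_zero i) (DX_mem_freeOf hu))
    · rw [Module.End.mul_apply, mx_apply, dxs_apply]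
      exact X_mul_mem_freeOf (inl_succ_ne_zero i) (DX_mem_freeOf hu)
  · intro i _
    rw [apply_ite (fun (T : Module.End F (MvPolynomial (SpIdx m) F)) => T u)]
    split
    · rw [Module.End.mul_apply, my_apply, dys_apply]
      exact X_mul_mem_freeOf (inr_ne_zero i) (DY_mem_freeOf hu)
    · rw [LinearMap.neg_apply, Module.End.mul_apply, my_apply, dys_apply]
      exact Submodule.neg_mem _
        (X_mul_mem_freeOf (inr_ne_zero i) (DY_mem_freeOf hu))

theorem DtSpA_X0pow (m1 m2 : ℕ) (a b : Fin m → F) (k : ℕ) {u : MvPolynomial (SpIdx m) F}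
    (hu : u ∈ freeOf F (Sum.inl 0)) :
    DtSpA F m m1 m2 a b (X (Sum.inl 0) ^ k * u)
      = (k : F) • (X (Sum.inl 0) ^ k * u)
        + X (Sum.inl 0) ^ k * DtSpA F m m1 m2 a b u := by
  simp only [DtSpA, LinearMap.add_apply, LinearMap.sum_apply]
  have h0 : (mx F m 0 * dx F m 0) (X (Sum.inl 0) ^ k * u)
      = (k : F) • (X (Sum.inl 0) ^ k * u) := by
    rw [Module.End.mul_apply, dx_apply, mx_apply]
    exact X0_pderiv0_X0pow_mul k (pderiv_self_of_freeOf hu)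
  have h0' : (mx F m 0 * dx F m 0) u = 0 := by
    rw [Module.End.mul_apply, dx_apply, pderiv_self_of_freeOf hu, mx_apply, mul_zero]
  have h1 : ∀ i : Fin m,
      (if (i : ℕ) < m1 then -(mx F m i.succ * dxs F m a i) else mx F m i.succ * dxs F m a i)
        (X (Sum.inl 0) ^ k * u)
      = X (Sum.inl 0) ^ k *
        ((if (i : ℕ) < m1 then -(mx F m i.succ * dxs F m a i) else mx F m i.succ * dxs F m a i) u) := by
    intro i
    rw [apply_ite (fun (T : Module.End F (MvPolynomial (SpIdx m) F)) =>
        T (X (Sum.inl 0) ^ k * u)),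
      apply_ite (fun (T : Module.End F (MvPolynomial (SpIdx m) F)) => T u)]
    split
    · rw [LinearMap.neg_apply, LinearMap.neg_apply, Module.End.mul_apply, Module.End.mul_apply,
        mx_apply, mx_apply, dxs_apply, dxs_apply, DX_X0pow, mul_neg, mul_left_comm]
    · rw [Module.End.mul_apply, Module.End.mul_apply,
        mx_apply, mx_apply, dxs_apply, dxs_apply, DX_X0pow, mul_left_comm]
  have h2 : ∀ i : Fin m,
      (if (i : ℕ) < m2 then my F m i * dys F m b i else -(my F m i * dys F m b i))
        (X (Sum.inl 0) ^ k * u)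
      = X (Sum.inl 0) ^ k *
        ((if (i : ℕ) < m2 then my F m i * dys F m b i else -(my F m i * dys F m b i)) u) := by
    intro i
    rw [apply_ite (fun (T : Module.End F (MvPolynomial (SpIdx m) F)) =>
        T (X (Sum.inl 0) ^ k * u)),
      apply_ite (fun (T : Module.End F (MvPolynomial (SpIdx m) F)) => T u)]
    split
    · rw [Module.End.mul_apply, Module.End.mul_apply,
        my_apply, my_apply, dys_apply, dys_apply, DY_X0pow, mul_left_comm]
    · rw [LinearMap.neg_apply, LinearMap.neg_apply, Module.End.mul_apply, Module.End.mul_apply,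
        my_apply, my_apply, dys_apply, dys_apply, DY_X0pow, mul_neg, mul_left_comm]
  rw [h0, Finset.sum_congr rfl (fun i _ => h1 i), Finset.sum_congr rfl (fun i _ => h2 i),
    ← Finset.mul_sum, ← Finset.mul_sum, h0', zero_add, mul_add]
  abel

end SpecificAux

end Stmt16Aux

set_option maxHeartbeats 1600000 in
open Stmt16Aux in
/-- assume `m1 ≥ 1`, `b_{j0} ≠ 0` for some `j0 ∈ {1,…,m1}`, and, if `m2 < m`,
`a_{i0} ≠ 0` for some `i0 ∈ {m2+1,…,m}`.  Then for every `c` the only subspaces of `A`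
invariant under every operator of the twisted family `Π^{a,b}(c;m1,m2)` are `{0}` and `A`. -/
theorem stmt_16 (F : Type*) [Field F] [CharZero F] (m m1 m2 : ℕ) (hm : 1 ≤ m)
    (hm1 : 1 ≤ m1) (h12 : m1 ≤ m2) (h2m : m2 ≤ m) (a b : Fin m → F)
    (hb : ∃ j0 : Fin m, (j0 : ℕ) < m1 ∧ b j0 ≠ 0)
    (ha : m2 < m → ∃ i0 : Fin m, m2 ≤ (i0 : ℕ) ∧ a i0 ≠ 0) (c : F) :
    ∀ W : Submodule F (MvPolynomial (SpIdx m) F),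
      (∀ T ∈ FamTA F m m1 m2 a b c, ∀ f ∈ W, T f ∈ W) →
      W = ⊥ ∨ W = ⊤ := by

  intro W hW
  by_cases hWbot : W = ⊥
  · exact Or.inl hWbot
  · right
    obtain ⟨j0, hj0m1, hbj0⟩ := hb
    have hj0m2 : (j0 : ℕ) < m2 := lt_of_lt_of_le hj0m1 h12
    -- the submodule of `x_0`-free polynomials
    set K : Submodule F (MvPolynomial (SpIdx m) F) := freeOf F (Sum.inl 0) with hKdef
    set V : Submodule F (MvPolynomial (SpIdx m) F) := W ⊓ K with hVdef
    have hVW : ∀ f, f ∈ V → f ∈ W := fun f hf => (Submodule.mem_inf.mp hf).1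
    have hVK : ∀ f, f ∈ V → f ∈ K := fun f hf => (Submodule.mem_inf.mp hf).2
    have hmkV : ∀ f, f ∈ W → f ∈ K → f ∈ V := fun f h1 h2 => Submodule.mem_inf.mpr ⟨h1, h2⟩
    have hVd0 : ∀ f, f ∈ V → pderiv (Sum.inl 0 : SpIdx m) f = 0 :=
      fun f hf => pderiv_self_of_freeOf (hVK f hf)
    -- W is closed under ∂_{x_0}
    have hd0W : ∀ f ∈ W, pderiv (Sum.inl 0 : SpIdx m) f ∈ W := by
      intro f hf
      have h1 := hW (-dx F m 0)
        (Or.inr (Or.inr (Or.inr (Or.inl rfl)))) f hf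
      have h2 : (-dx F m 0) f = -(pderiv (Sum.inl 0 : SpIdx m) f) := rfl
      rw [h2] at h1
      simpa using W.neg_mem h1
    -- Phase A : V contains a nonzero element
    have hVnz : ∃ g, g ∈ V ∧ g ≠ 0 := by
      obtain ⟨f, hfW, hf0⟩ := (Submodule.ne_bot_iff W).mp hWbot
      suffices h : ∀ n : ℕ, ∀ f, f ∈ W → f ≠ 0 →
          degreeOf (Sum.inl 0 : SpIdx m) f ≤ n → ∃ g, g ∈ V ∧ g ≠ 0 by
        exact h _ f hfW hf0 le_rfl
      intro n
      induction n with
      | zero =>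
        intro f hfW hf0 hdeg
        have hp : pderiv (Sum.inl 0 : SpIdx m) f = 0 :=
          pderiv_eq_zero_of_degreeOf_zero (Nat.le_zero.mp hdeg)
        exact ⟨f, hmkV f hfW (freeOf_of_pderiv hp), hf0⟩
      | succ n ih =>
        intro f hfW hf0 hdeg
        by_cases hp : pderiv (Sum.inl 0 : SpIdx m) f = 0
        · exact ⟨f, hmkV f hfW (freeOf_of_pderiv hp), hf0⟩
        · have hne : degreeOf (Sum.inl 0 : SpIdx m) f ≠ 0 :=
            fun h => hp (pderiv_eq_zero_of_degreeOf_zero h)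
          have hlt := degreeOf_pderiv_lt (F := F) hne
          exact ih _ (hd0W f hfW) hp (by omega)
    -- CV1 : twisted y-derivatives, j < m2
    have hdY : ∀ (j : Fin m), (j : ℕ) < m2 → ∀ f, f ∈ V → DY b j f ∈ V := by
      intro j hj f hf
      have hT := hW (RspA F m m1 m2 a b j)
        (Or.inr (Or.inr (Or.inr (Or.inr (Or.inr (Or.inl ⟨j, rfl⟩)))))) f (hVW f hf)
      by_cases hj1 : (j : ℕ) < m1
      · have hval : RspA F m m1 m2 a b j f = DY b j f := by
          simp only [RspA, if_pos hj1, LinearMap.add_apply, Module.End.mul_apply,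
            dx_apply, dxs_apply, dys_apply]
          rw [pderiv_self_of_freeOf (DX_mem_freeOf (hVK f hf)), zero_add]
        rw [hval] at hT
        exact hmkV _ hT (DY_mem_freeOf (hVK f hf))
      · have hval : RspA F m m1 m2 a b j f = DY b j f := by
          simp only [RspA, if_neg hj1, if_pos hj, LinearMap.add_apply, Module.End.mul_apply,
            dx_apply, dys_apply, mx_apply]
          rw [hVd0 f hf, mul_zero, zero_add]
        rw [hval] at hT
        exact hmkV _ hT (DY_mem_freeOf (hVK f hf))
    have hdYp : ∀ (j : Fin m), (j : ℕ) < m2 → ∀ f, f ∈ V → pderiv (Sum.inr j) f ∈ V := by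
      intro j hj f hf
      have h1 := hdY j hj f hf
      have h2 : pderiv (Sum.inr j) f = DY b j f - b j • f := by
        rw [DY, add_sub_cancel_right]
      rw [h2]; exact V.sub_mem h1 (V.smul_mem _ hf)
    -- CV2 : twisted x-derivatives, m1 ≤ r
    have hdX2 : ∀ (r : Fin m), m1 ≤ (r : ℕ) → ∀ f, f ∈ V → DX a r f ∈ V := by
      intro r hr f hf
      have hr1 : ¬ ((r : ℕ) < m1) := by omega
      have hT := hW (SspA F m m1 m2 a b r)
        (Or.inr (Or.inr (Or.inr (Or.inr (Or.inr (Or.inr (Or.inl ⟨r, rfl⟩))))))) f (hVW f hf)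
      by_cases hr2 : (r : ℕ) < m2
      · have hval : SspA F m m1 m2 a b r f = -(DX a r f) := by
          simp only [SspA, if_neg hr1, if_pos hr2, LinearMap.sub_apply, Module.End.mul_apply,
            dx_apply, dxs_apply, my_apply]
          rw [hVd0 f hf, mul_zero, zero_sub]
        rw [hval] at hT
        have := W.neg_mem hT
        rw [neg_neg] at this
        exact hmkV _ this (DX_mem_freeOf (hVK f hf))
      · have hval : SspA F m m1 m2 a b r f = -(DX a r f) := by
          simp only [SspA, if_neg hr1, if_neg hr2, LinearMap.sub_apply, Module.End.mul_apply,
            dx_apply, dxs_apply, dys_apply]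
          rw [pderiv_self_of_freeOf (DY_mem_freeOf (hVK f hf)), zero_sub]
        rw [hval] at hT
        have := W.neg_mem hT
        rw [neg_neg] at this
        exact hmkV _ this (DX_mem_freeOf (hVK f hf))
    have hdXp2 : ∀ (r : Fin m), m1 ≤ (r : ℕ) → ∀ f, f ∈ V →
        pderiv (Sum.inl r.succ) f ∈ V := by
      intro r hr f hf
      have h1 := hdX2 r hr f hf
      have h2 : pderiv (Sum.inl r.succ) f = DX a r f - a r • f := by
        rw [DX, add_sub_cancel_right]
      rw [h2]; exact V.sub_mem h1 (V.smul_mem _ hf)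
    -- CV3 : multiplication by x_i, i < m1
    have hmx1 : ∀ (i : Fin m), (i : ℕ) < m1 → ∀ f, f ∈ V →
        X (Sum.inl i.succ : SpIdx m) * f ∈ V := by
      intro i hi f hf
      have hT := hW (SspA F m m1 m2 a b i)
        (Or.inr (Or.inr (Or.inr (Or.inr (Or.inr (Or.inr (Or.inl ⟨i, rfl⟩))))))) f (hVW f hf)
      have hval : SspA F m m1 m2 a b i f = X (Sum.inl i.succ : SpIdx m) * f := by
        simp only [SspA, if_pos hi, LinearMap.add_apply, Module.End.mul_apply,
          dx_apply, mx_apply, my_apply]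
        rw [hVd0 f hf, mul_zero, zero_add]
      rw [hval] at hT
      exact hmkV _ hT (X_mul_mem_freeOf (inl_succ_ne_zero i) (hVK f hf))
    -- CV4 : multiplication by y_s, m2 ≤ s
    have hmy2 : ∀ (s : Fin m), m2 ≤ (s : ℕ) → ∀ f, f ∈ V →
        X (Sum.inr s : SpIdx m) * f ∈ V := by
      intro s hs f hf
      have hs2 : ¬ ((s : ℕ) < m2) := by omega
      have hT := hW (RspA F m m1 m2 a b s)
        (Or.inr (Or.inr (Or.inr (Or.inr (Or.inr (Or.inl ⟨s, rfl⟩)))))) f (hVW f hf)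
      have hs1 : ¬ ((s : ℕ) < m1) := by omega
      have hval : RspA F m m1 m2 a b s f = -(X (Sum.inr s : SpIdx m) * f) := by
        simp only [RspA, if_neg hs1, if_neg hs2, LinearMap.sub_apply, Module.End.mul_apply,
          dx_apply, mx_apply, my_apply]
        rw [hVd0 f hf, mul_zero, zero_sub]
      rw [hval] at hT
      have := W.neg_mem hT
      rw [neg_neg] at this
      exact hmkV _ this (X_mul_mem_freeOf (inr_ne_zero s) (hVK f hf))
    -- CV5 stage 1 : twisted x-derivative at j0
    have hdXj0 : ∀ f, f ∈ V → DX a j0 f ∈ V := by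
      suffices h : ∀ n : ℕ, ∀ f, f ∈ V → degreeOf (Sum.inr j0 : SpIdx m) f ≤ n →
          DX a j0 f ∈ V from fun f hf => h _ f hf le_rfl
      intro n
      induction n with
      | zero =>
        intro f hf hdeg
        have hp : pderiv (Sum.inr j0 : SpIdx m) f = 0 :=
          pderiv_eq_zero_of_degreeOf_zero (Nat.le_zero.mp hdeg)
        have hT := hW (FoA F m m1 m2 a b j0 j0 + FoA F m m1 m2 a b j0 j0)
          (Or.inr (Or.inl ⟨j0, j0, rfl⟩)) f (hVW f hf)
        have hval : (FoA F m m1 m2 a b j0 j0 + FoA F m m1 m2 a b j0 j0) f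
            = DX a j0 (DY b j0 f) + DX a j0 (DY b j0 f) := by
          simp only [FoA, if_pos hj0m1, if_pos hj0m2, LinearMap.add_apply,
            Module.End.mul_apply, dxs_apply, dys_apply]
        rw [hval] at hT
        have hcombo : DX a j0 (DY b j0 f) ∈ V := by
          have hKm : DX a j0 (DY b j0 f) ∈ K := DX_mem_freeOf (DY_mem_freeOf (hVK f hf))
          have h2 : DX a j0 (DY b j0 f)
              = (2:F)⁻¹ • (DX a j0 (DY b j0 f) + DX a j0 (DY b j0 f)) := by
            rw [← two_smul F, smul_smul, inv_mul_cancel₀ (two_ne_zero), one_smul]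
          rw [h2]
          exact V.smul_mem _ (hmkV _ hT (K.add_mem hKm hKm))
        have hexp : DX a j0 (DY b j0 f)
            = DX a j0 (pderiv (Sum.inr j0 : SpIdx m) f) + b j0 • DX a j0 f := by
          rw [show DY b j0 f = pderiv (Sum.inr j0 : SpIdx m) f + b j0 • f from rfl,
            DX_add, DX_smul]
        rw [hexp, hp, DX_zero, zero_add] at hcombo
        have h3 : DX a j0 f = (b j0)⁻¹ • (b j0 • DX a j0 f) := by
          rw [smul_smul, inv_mul_cancel₀ hbj0, one_smul]
        rw [h3]
        exact V.smul_mem _ hcombo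
      | succ n ih =>
        intro f hf hdeg
        have hT := hW (FoA F m m1 m2 a b j0 j0 + FoA F m m1 m2 a b j0 j0)
          (Or.inr (Or.inl ⟨j0, j0, rfl⟩)) f (hVW f hf)
        have hval : (FoA F m m1 m2 a b j0 j0 + FoA F m m1 m2 a b j0 j0) f
            = DX a j0 (DY b j0 f) + DX a j0 (DY b j0 f) := by
          simp only [FoA, if_pos hj0m1, if_pos hj0m2, LinearMap.add_apply,
            Module.End.mul_apply, dxs_apply, dys_apply]
        rw [hval] at hT
        have hcombo : DX a j0 (DY b j0 f) ∈ V := by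
          have hKm : DX a j0 (DY b j0 f) ∈ K := DX_mem_freeOf (DY_mem_freeOf (hVK f hf))
          have h2 : DX a j0 (DY b j0 f)
              = (2:F)⁻¹ • (DX a j0 (DY b j0 f) + DX a j0 (DY b j0 f)) := by
            rw [← two_smul F, smul_smul, inv_mul_cancel₀ (two_ne_zero), one_smul]
          rw [h2]
          exact V.smul_mem _ (hmkV _ hT (K.add_mem hKm hKm))
        have hexp : DX a j0 (DY b j0 f)
            = DX a j0 (pderiv (Sum.inr j0 : SpIdx m) f) + b j0 • DX a j0 f := by
          rw [show DY b j0 f = pderiv (Sum.inr j0 : SpIdx m) f + b j0 • f from rfl,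
            DX_add, DX_smul]
        rw [hexp] at hcombo
        have hfirst : DX a j0 (pderiv (Sum.inr j0 : SpIdx m) f) ∈ V := by
          by_cases hp : pderiv (Sum.inr j0 : SpIdx m) f = 0
          · rw [hp, DX_zero]; exact V.zero_mem
          · have hne : degreeOf (Sum.inr j0 : SpIdx m) f ≠ 0 :=
              fun h => hp (pderiv_eq_zero_of_degreeOf_zero h)
            have hlt := degreeOf_pderiv_lt (F := F) hne
            exact ih _ (hdYp j0 hj0m2 f hf) (by omega)
        have h4 : b j0 • DX a j0 f
            = DX a j0 (pderiv (Sum.inr j0 : SpIdx m) f) + b j0 • DX a j0 f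
              - DX a j0 (pderiv (Sum.inr j0 : SpIdx m) f) := by abel
        have h5 : b j0 • DX a j0 f ∈ V := by rw [h4]; exact V.sub_mem hcombo hfirst
        have h3 : DX a j0 f = (b j0)⁻¹ • (b j0 • DX a j0 f) := by
          rw [smul_smul, inv_mul_cancel₀ hbj0, one_smul]
        rw [h3]
        exact V.smul_mem _ h5
    -- CV5 : twisted x-derivatives, i < m1
    have hdX1 : ∀ (i : Fin m), (i : ℕ) < m1 → ∀ f, f ∈ V → DX a i f ∈ V := by
      intro i hi
      have hi2 : (i : ℕ) < m2 := lt_of_lt_of_le hi h12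
      suffices h : ∀ n : ℕ, ∀ f, f ∈ V → degreeOf (Sum.inr j0 : SpIdx m) f ≤ n →
          DX a i f ∈ V from fun f hf => h _ f hf le_rfl
      intro n
      induction n with
      | zero =>
        intro f hf hdeg
        have hp : pderiv (Sum.inr j0 : SpIdx m) f = 0 :=
          pderiv_eq_zero_of_degreeOf_zero (Nat.le_zero.mp hdeg)
        have hT := hW (FoA F m m1 m2 a b i j0 + FoA F m m1 m2 a b j0 i)
          (Or.inr (Or.inl ⟨i, j0, rfl⟩)) f (hVW f hf)
        have hval : (FoA F m m1 m2 a b i j0 + FoA F m m1 m2 a b j0 i) f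
            = DX a i (DY b j0 f) + DX a j0 (DY b i f) := by
          simp only [FoA, if_pos hj0m1, if_pos hj0m2, if_pos hi, if_pos hi2,
            LinearMap.add_apply, Module.End.mul_apply, dxs_apply, dys_apply]
        rw [hval] at hT
        have hsecond : DX a j0 (DY b i f) ∈ V := hdXj0 _ (hdY i hi2 f hf)
        have hcombo : DX a i (DY b j0 f) ∈ V := by
          have hKm : DX a i (DY b j0 f) ∈ K := DX_mem_freeOf (DY_mem_freeOf (hVK f hf))
          have hVsum : DX a i (DY b j0 f) + DX a j0 (DY b i f) ∈ V :=
            hmkV _ hT (K.add_mem hKm (DX_mem_freeOf (DY_mem_freeOf (hVK f hf))))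
          have h4 : DX a i (DY b j0 f)
              = DX a i (DY b j0 f) + DX a j0 (DY b i f) - DX a j0 (DY b i f) := by abel
          rw [h4]; exact V.sub_mem hVsum hsecond
        have hexp : DX a i (DY b j0 f)
            = DX a i (pderiv (Sum.inr j0 : SpIdx m) f) + b j0 • DX a i f := by
          rw [show DY b j0 f = pderiv (Sum.inr j0 : SpIdx m) f + b j0 • f from rfl,
            DX_add, DX_smul]
        rw [hexp, hp, DX_zero, zero_add] at hcombo
        have h3 : DX a i f = (b j0)⁻¹ • (b j0 • DX a i f) := by
          rw [smul_smul, inv_mul_cancel₀ hbj0, one_smul]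
        rw [h3]
        exact V.smul_mem _ hcombo
      | succ n ih =>
        intro f hf hdeg
        have hT := hW (FoA F m m1 m2 a b i j0 + FoA F m m1 m2 a b j0 i)
          (Or.inr (Or.inl ⟨i, j0, rfl⟩)) f (hVW f hf)
        have hval : (FoA F m m1 m2 a b i j0 + FoA F m m1 m2 a b j0 i) f
            = DX a i (DY b j0 f) + DX a j0 (DY b i f) := by
          simp only [FoA, if_pos hj0m1, if_pos hj0m2, if_pos hi, if_pos hi2,
            LinearMap.add_apply, Module.End.mul_apply, dxs_apply, dys_apply]
        rw [hval] at hT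
        have hsecond : DX a j0 (DY b i f) ∈ V := hdXj0 _ (hdY i hi2 f hf)
        have hcombo : DX a i (DY b j0 f) ∈ V := by
          have hKm : DX a i (DY b j0 f) ∈ K := DX_mem_freeOf (DY_mem_freeOf (hVK f hf))
          have hVsum : DX a i (DY b j0 f) + DX a j0 (DY b i f) ∈ V :=
            hmkV _ hT (K.add_mem hKm (DX_mem_freeOf (DY_mem_freeOf (hVK f hf))))
          have h4 : DX a i (DY b j0 f)
              = DX a i (DY b j0 f) + DX a j0 (DY b i f) - DX a j0 (DY b i f) := by abel
          rw [h4]; exact V.sub_mem hVsum hsecond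
        have hexp : DX a i (DY b j0 f)
            = DX a i (pderiv (Sum.inr j0 : SpIdx m) f) + b j0 • DX a i f := by
          rw [show DY b j0 f = pderiv (Sum.inr j0 : SpIdx m) f + b j0 • f from rfl,
            DX_add, DX_smul]
        rw [hexp] at hcombo
        have hfirst : DX a i (pderiv (Sum.inr j0 : SpIdx m) f) ∈ V := by
          by_cases hp : pderiv (Sum.inr j0 : SpIdx m) f = 0
          · rw [hp, DX_zero]; exact V.zero_mem
          · have hne : degreeOf (Sum.inr j0 : SpIdx m) f ≠ 0 :=
              fun h => hp (pderiv_eq_zero_of_degreeOf_zero h)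
            have hlt := degreeOf_pderiv_lt (F := F) hne
            exact ih _ (hdYp j0 hj0m2 f hf) (by omega)
        have h4 : b j0 • DX a i f
            = DX a i (pderiv (Sum.inr j0 : SpIdx m) f) + b j0 • DX a i f
              - DX a i (pderiv (Sum.inr j0 : SpIdx m) f) := by abel
        have h5 : b j0 • DX a i f ∈ V := by rw [h4]; exact V.sub_mem hcombo hfirst
        have h3 : DX a i f = (b j0)⁻¹ • (b j0 • DX a i f) := by
          rw [smul_smul, inv_mul_cancel₀ hbj0, one_smul]
        rw [h3]
        exact V.smul_mem _ h5
    have hdXp1 : ∀ (i : Fin m), (i : ℕ) < m1 → ∀ f, f ∈ V →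
        pderiv (Sum.inl i.succ) f ∈ V := by
      intro i hi f hf
      have h1 := hdX1 i hi f hf
      have h2 : pderiv (Sum.inl i.succ) f = DX a i f - a i • f := by
        rw [DX, add_sub_cancel_right]
      rw [h2]; exact V.sub_mem h1 (V.smul_mem _ hf)
    -- all plain x-derivatives
    have hdXp : ∀ (i : Fin m), ∀ f, f ∈ V → pderiv (Sum.inl i.succ) f ∈ V := by
      intro i f hf
      by_cases hi : (i : ℕ) < m1
      · exact hdXp1 i hi f hf
      · exact hdXp2 i (by omega) f hf
    -- CV6 : twisted y-derivatives, m2 ≤ s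
    have hdY2 : ∀ (s : Fin m), m2 ≤ (s : ℕ) → ∀ f, f ∈ V → DY b s f ∈ V := by
      intro s hs
      have hm2m : m2 < m := lt_of_le_of_lt hs s.isLt
      obtain ⟨i0, hi0, hai0⟩ := ha hm2m
      have hi0m1 : ¬ ((i0 : ℕ) < m1) := by omega
      have hi0m2 : ¬ ((i0 : ℕ) < m2) := by omega
      have hs1 : ¬ ((s : ℕ) < m1) := by omega
      have hs2 : ¬ ((s : ℕ) < m2) := by omega
      have hdYi0 : ∀ f, f ∈ V → DY b i0 f ∈ V := by
        suffices h : ∀ n : ℕ, ∀ f, f ∈ V → degreeOf (Sum.inl i0.succ : SpIdx m) f ≤ n →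
            DY b i0 f ∈ V from fun f hf => h _ f hf le_rfl
        intro n
        induction n with
        | zero =>
          intro f hf hdeg
          have hp : pderiv (Sum.inl i0.succ : SpIdx m) f = 0 :=
            pderiv_eq_zero_of_degreeOf_zero (Nat.le_zero.mp hdeg)
          have hT := hW (GoA F m m1 m2 a b i0 i0 + GoA F m m1 m2 a b i0 i0)
            (Or.inr (Or.inr (Or.inl ⟨i0, i0, rfl⟩))) f (hVW f hf)
          have hval : (GoA F m m1 m2 a b i0 i0 + GoA F m m1 m2 a b i0 i0) f
              = DX a i0 (DY b i0 f) + DX a i0 (DY b i0 f) := by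
            simp only [GoA, if_neg hi0m1, if_neg hi0m2, LinearMap.add_apply,
              Module.End.mul_apply, dxs_apply, dys_apply]
          rw [hval] at hT
          have hcombo : DX a i0 (DY b i0 f) ∈ V := by
            have hKm : DX a i0 (DY b i0 f) ∈ K := DX_mem_freeOf (DY_mem_freeOf (hVK f hf))
            have h2 : DX a i0 (DY b i0 f)
                = (2:F)⁻¹ • (DX a i0 (DY b i0 f) + DX a i0 (DY b i0 f)) := by
              rw [← two_smul F, smul_smul, inv_mul_cancel₀ (two_ne_zero), one_smul]
            rw [h2]
            exact V.smul_mem _ (hmkV _ hT (K.add_mem hKm hKm))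
          rw [DX_DY_comm] at hcombo
          have hexp : DY b i0 (DX a i0 f)
              = DY b i0 (pderiv (Sum.inl i0.succ : SpIdx m) f) + a i0 • DY b i0 f := by
            rw [show DX a i0 f = pderiv (Sum.inl i0.succ : SpIdx m) f + a i0 • f from rfl,
              DY_add, DY_smul]
          rw [hexp, hp, DY_zero, zero_add] at hcombo
          have h3 : DY b i0 f = (a i0)⁻¹ • (a i0 • DY b i0 f) := by
            rw [smul_smul, inv_mul_cancel₀ hai0, one_smul]
          rw [h3]
          exact V.smul_mem _ hcombo
        | succ n ih =>
          intro f hf hdeg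
          have hT := hW (GoA F m m1 m2 a b i0 i0 + GoA F m m1 m2 a b i0 i0)
            (Or.inr (Or.inr (Or.inl ⟨i0, i0, rfl⟩))) f (hVW f hf)
          have hval : (GoA F m m1 m2 a b i0 i0 + GoA F m m1 m2 a b i0 i0) f
              = DX a i0 (DY b i0 f) + DX a i0 (DY b i0 f) := by
            simp only [GoA, if_neg hi0m1, if_neg hi0m2, LinearMap.add_apply,
              Module.End.mul_apply, dxs_apply, dys_apply]
          rw [hval] at hT
          have hcombo : DX a i0 (DY b i0 f) ∈ V := by
            have hKm : DX a i0 (DY b i0 f) ∈ K := DX_mem_freeOf (DY_mem_freeOf (hVK f hf))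
            have h2 : DX a i0 (DY b i0 f)
                = (2:F)⁻¹ • (DX a i0 (DY b i0 f) + DX a i0 (DY b i0 f)) := by
              rw [← two_smul F, smul_smul, inv_mul_cancel₀ (two_ne_zero), one_smul]
            rw [h2]
            exact V.smul_mem _ (hmkV _ hT (K.add_mem hKm hKm))
          rw [DX_DY_comm] at hcombo
          have hexp : DY b i0 (DX a i0 f)
              = DY b i0 (pderiv (Sum.inl i0.succ : SpIdx m) f) + a i0 • DY b i0 f := by
            rw [show DX a i0 f = pderiv (Sum.inl i0.succ : SpIdx m) f + a i0 • f from rfl,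
              DY_add, DY_smul]
          rw [hexp] at hcombo
          have hfirst : DY b i0 (pderiv (Sum.inl i0.succ : SpIdx m) f) ∈ V := by
            by_cases hp : pderiv (Sum.inl i0.succ : SpIdx m) f = 0
            · rw [hp, DY_zero]; exact V.zero_mem
            · have hne : degreeOf (Sum.inl i0.succ : SpIdx m) f ≠ 0 :=
                fun h => hp (pderiv_eq_zero_of_degreeOf_zero h)
              have hlt := degreeOf_pderiv_lt (F := F) hne
              exact ih _ (hdXp2 i0 (by omega) f hf) (by omega)
          have h4 : a i0 • DY b i0 f
              = DY b i0 (pderiv (Sum.inl i0.succ : SpIdx m) f) + a i0 • DY b i0 f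
                - DY b i0 (pderiv (Sum.inl i0.succ : SpIdx m) f) := by abel
          have h5 : a i0 • DY b i0 f ∈ V := by rw [h4]; exact V.sub_mem hcombo hfirst
          have h3 : DY b i0 f = (a i0)⁻¹ • (a i0 • DY b i0 f) := by
            rw [smul_smul, inv_mul_cancel₀ hai0, one_smul]
          rw [h3]
          exact V.smul_mem _ h5
      suffices h : ∀ n : ℕ, ∀ f, f ∈ V → degreeOf (Sum.inl i0.succ : SpIdx m) f ≤ n →
          DY b s f ∈ V from fun f hf => h _ f hf le_rfl
      intro n
      induction n with
      | zero =>
        intro f hf hdeg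
        have hp : pderiv (Sum.inl i0.succ : SpIdx m) f = 0 :=
          pderiv_eq_zero_of_degreeOf_zero (Nat.le_zero.mp hdeg)
        have hT := hW (GoA F m m1 m2 a b s i0 + GoA F m m1 m2 a b i0 s)
          (Or.inr (Or.inr (Or.inl ⟨s, i0, rfl⟩))) f (hVW f hf)
        have hval : (GoA F m m1 m2 a b s i0 + GoA F m m1 m2 a b i0 s) f
            = DX a i0 (DY b s f) + DX a s (DY b i0 f) := by
          simp only [GoA, if_neg hi0m1, if_neg hi0m2, if_neg hs1, if_neg hs2,
            LinearMap.add_apply, Module.End.mul_apply, dxs_apply, dys_apply]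
        rw [hval] at hT
        have hsecond : DX a s (DY b i0 f) ∈ V := hdX2 s (by omega) _ (hdYi0 f hf)
        have hcombo : DX a i0 (DY b s f) ∈ V := by
          have hKm : DX a i0 (DY b s f) ∈ K := DX_mem_freeOf (DY_mem_freeOf (hVK f hf))
          have hVsum : DX a i0 (DY b s f) + DX a s (DY b i0 f) ∈ V :=
            hmkV _ hT (K.add_mem hKm (DX_mem_freeOf (DY_mem_freeOf (hVK f hf))))
          have h4 : DX a i0 (DY b s f)
              = DX a i0 (DY b s f) + DX a s (DY b i0 f) - DX a s (DY b i0 f) := by abel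
          rw [h4]; exact V.sub_mem hVsum hsecond
        rw [DX_DY_comm] at hcombo
        have hexp : DY b s (DX a i0 f)
            = DY b s (pderiv (Sum.inl i0.succ : SpIdx m) f) + a i0 • DY b s f := by
          rw [show DX a i0 f = pderiv (Sum.inl i0.succ : SpIdx m) f + a i0 • f from rfl,
            DY_add, DY_smul]
        rw [hexp, hp, DY_zero, zero_add] at hcombo
        have h3 : DY b s f = (a i0)⁻¹ • (a i0 • DY b s f) := by
          rw [smul_smul, inv_mul_cancel₀ hai0, one_smul]
        rw [h3]
        exact V.smul_mem _ hcombo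
      | succ n ih =>
        intro f hf hdeg
        have hT := hW (GoA F m m1 m2 a b s i0 + GoA F m m1 m2 a b i0 s)
          (Or.inr (Or.inr (Or.inl ⟨s, i0, rfl⟩))) f (hVW f hf)
        have hval : (GoA F m m1 m2 a b s i0 + GoA F m m1 m2 a b i0 s) f
            = DX a i0 (DY b s f) + DX a s (DY b i0 f) := by
          simp only [GoA, if_neg hi0m1, if_neg hi0m2, if_neg hs1, if_neg hs2,
            LinearMap.add_apply, Module.End.mul_apply, dxs_apply, dys_apply]
        rw [hval] at hT
        have hsecond : DX a s (DY b i0 f) ∈ V := hdX2 s (by omega) _ (hdYi0 f hf)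
        have hcombo : DX a i0 (DY b s f) ∈ V := by
          have hKm : DX a i0 (DY b s f) ∈ K := DX_mem_freeOf (DY_mem_freeOf (hVK f hf))
          have hVsum : DX a i0 (DY b s f) + DX a s (DY b i0 f) ∈ V :=
            hmkV _ hT (K.add_mem hKm (DX_mem_freeOf (DY_mem_freeOf (hVK f hf))))
          have h4 : DX a i0 (DY b s f)
              = DX a i0 (DY b s f) + DX a s (DY b i0 f) - DX a s (DY b i0 f) := by abel
          rw [h4]; exact V.sub_mem hVsum hsecond
        rw [DX_DY_comm] at hcombo
        have hexp : DY b s (DX a i0 f)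
            = DY b s (pderiv (Sum.inl i0.succ : SpIdx m) f) + a i0 • DY b s f := by
          rw [show DX a i0 f = pderiv (Sum.inl i0.succ : SpIdx m) f + a i0 • f from rfl,
            DY_add, DY_smul]
        rw [hexp] at hcombo
        have hfirst : DY b s (pderiv (Sum.inl i0.succ : SpIdx m) f) ∈ V := by
          by_cases hp : pderiv (Sum.inl i0.succ : SpIdx m) f = 0
          · rw [hp, DY_zero]; exact V.zero_mem
          · have hne : degreeOf (Sum.inl i0.succ : SpIdx m) f ≠ 0 :=
              fun h => hp (pderiv_eq_zero_of_degreeOf_zero h)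
            have hlt := degreeOf_pderiv_lt (F := F) hne
            exact ih _ (hdXp2 i0 (by omega) f hf) (by omega)
        have h4 : a i0 • DY b s f
            = DY b s (pderiv (Sum.inl i0.succ : SpIdx m) f) + a i0 • DY b s f
              - DY b s (pderiv (Sum.inl i0.succ : SpIdx m) f) := by abel
        have h5 : a i0 • DY b s f ∈ V := by rw [h4]; exact V.sub_mem hcombo hfirst
        have h3 : DY b s f = (a i0)⁻¹ • (a i0 • DY b s f) := by
          rw [smul_smul, inv_mul_cancel₀ hai0, one_smul]
        rw [h3]
        exact V.smul_mem _ h5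
    -- all plain y-derivatives
    have hdYpAll : ∀ (j : Fin m), ∀ f, f ∈ V → pderiv (Sum.inr j) f ∈ V := by
      intro j f hf
      by_cases hj : (j : ℕ) < m2
      · exact hdYp j hj f hf
      · have h1 := hdY2 j (by omega) f hf
        have h2 : pderiv (Sum.inr j) f = DY b j f - b j • f := by
          rw [DY, add_sub_cancel_right]
        rw [h2]; exact V.sub_mem h1 (V.smul_mem _ hf)
    -- CV7 step 1 : pair multiplication x_j y_j for j < m1
    have hxy1 : ∀ (j : Fin m), (j : ℕ) < m1 → ∀ f, f ∈ V →
        X (Sum.inl j.succ : SpIdx m) * (X (Sum.inr j : SpIdx m) * f) ∈ V := by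
      intro j hj f hf
      have hj2 : (j : ℕ) < m2 := lt_of_lt_of_le hj h12
      have hT := hW (GoA F m m1 m2 a b j j + GoA F m m1 m2 a b j j)
        (Or.inr (Or.inr (Or.inl ⟨j, j, rfl⟩))) f (hVW f hf)
      have hval : (GoA F m m1 m2 a b j j + GoA F m m1 m2 a b j j) f
          = -(X (Sum.inl j.succ : SpIdx m) * (X (Sum.inr j : SpIdx m) * f))
            + -(X (Sum.inl j.succ : SpIdx m) * (X (Sum.inr j : SpIdx m) * f)) := by
        simp only [GoA, if_pos hj, if_pos hj2, LinearMap.add_apply, LinearMap.neg_apply,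
          Module.End.mul_apply, mx_apply, my_apply]
      rw [hval] at hT
      have hKm : X (Sum.inl j.succ : SpIdx m) * (X (Sum.inr j : SpIdx m) * f) ∈ K :=
        X_mul_mem_freeOf (inl_succ_ne_zero j)
          (X_mul_mem_freeOf (inr_ne_zero j) (hVK f hf))
      have h2 : -(X (Sum.inl j.succ : SpIdx m) * (X (Sum.inr j : SpIdx m) * f))
          + -(X (Sum.inl j.succ : SpIdx m) * (X (Sum.inr j : SpIdx m) * f))
          = ((-2 : F)) • (X (Sum.inl j.succ : SpIdx m) * (X (Sum.inr j : SpIdx m) * f)) := by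
        rw [neg_smul, two_smul, neg_add]
      have h3 : X (Sum.inl j.succ : SpIdx m) * (X (Sum.inr j : SpIdx m) * f)
          = (-2 : F)⁻¹ • (((-2 : F)) •
            (X (Sum.inl j.succ : SpIdx m) * (X (Sum.inr j : SpIdx m) * f))) := by
        rw [smul_smul, inv_mul_cancel₀ (neg_ne_zero.mpr two_ne_zero), one_smul]
      rw [h3]
      refine V.smul_mem _ ?_
      rw [← h2]
      exact hmkV _ hT (K.add_mem (K.neg_mem hKm) (K.neg_mem hKm))
    -- CV7 step 2 : multiplication by y_j for j < m1
    have hmy1 : ∀ (j : Fin m), (j : ℕ) < m1 → ∀ f, f ∈ V →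
        X (Sum.inr j : SpIdx m) * f ∈ V := by
      intro j hj f hf
      have h1 := hdXp j _ (hxy1 j hj f hf)
      have hcomp : pderiv (Sum.inl j.succ : SpIdx m)
          (X (Sum.inl j.succ : SpIdx m) * (X (Sum.inr j : SpIdx m) * f))
          = X (Sum.inr j : SpIdx m) * f
            + X (Sum.inl j.succ : SpIdx m) * (X (Sum.inr j : SpIdx m)
              * pderiv (Sum.inl j.succ : SpIdx m) f) := by
        rw [pderiv_mul, pderiv_mul, pderiv_X_self,
          pderiv_X_of_ne (by simp : (Sum.inr j : SpIdx m) ≠ Sum.inl j.succ),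
          one_mul, zero_mul, zero_add]
      rw [hcomp] at h1
      have hjunk : X (Sum.inl j.succ : SpIdx m) * (X (Sum.inr j : SpIdx m)
          * pderiv (Sum.inl j.succ : SpIdx m) f) ∈ V :=
        hxy1 j hj _ (hdXp j f hf)
      have h4 : X (Sum.inr j : SpIdx m) * f
          = (X (Sum.inr j : SpIdx m) * f
            + X (Sum.inl j.succ : SpIdx m) * (X (Sum.inr j : SpIdx m)
              * pderiv (Sum.inl j.succ : SpIdx m) f))
            - X (Sum.inl j.succ : SpIdx m) * (X (Sum.inr j : SpIdx m)
              * pderiv (Sum.inl j.succ : SpIdx m) f) := by abel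
      rw [h4]
      exact V.sub_mem h1 hjunk
    -- CV7 step 3 : multiplication by y_j for m1 ≤ j < m2
    have hmy12 : ∀ (j : Fin m), m1 ≤ (j : ℕ) → (j : ℕ) < m2 → ∀ f, f ∈ V →
        X (Sum.inr j : SpIdx m) * f ∈ V := by
      intro j hjm1 hjm2
      have hj1 : ¬ ((j : ℕ) < m1) := by omega
      have hxyc : ∀ f, f ∈ V →
          X (Sum.inl j0.succ : SpIdx m) * (X (Sum.inr j : SpIdx m) * f) ∈ V := by
        intro f hf
        have hT := hW (GoA F m m1 m2 a b j j0 + GoA F m m1 m2 a b j0 j)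
          (Or.inr (Or.inr (Or.inl ⟨j, j0, rfl⟩))) f (hVW f hf)
        have hval : (GoA F m m1 m2 a b j j0 + GoA F m m1 m2 a b j0 j) f
            = -(X (Sum.inl j0.succ : SpIdx m) * (X (Sum.inr j : SpIdx m) * f))
              + X (Sum.inr j0 : SpIdx m) * (DX a j f) := by
          simp only [GoA, if_pos hj0m1, if_pos hjm2, if_neg hj1, if_pos hj0m2,
            LinearMap.add_apply, LinearMap.neg_apply, Module.End.mul_apply,
            mx_apply, my_apply, dxs_apply]
        rw [hval] at hT
        have hsecond : X (Sum.inr j0 : SpIdx m) * (DX a j f) ∈ V :=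
          hmy1 j0 hj0m1 _ (hdX2 j hjm1 f hf)
        have hKm : X (Sum.inl j0.succ : SpIdx m) * (X (Sum.inr j : SpIdx m) * f) ∈ K :=
          X_mul_mem_freeOf (inl_succ_ne_zero j0)
            (X_mul_mem_freeOf (inr_ne_zero j) (hVK f hf))
        have hVsum : -(X (Sum.inl j0.succ : SpIdx m) * (X (Sum.inr j : SpIdx m) * f))
            + X (Sum.inr j0 : SpIdx m) * (DX a j f) ∈ V :=
          hmkV _ hT (K.add_mem (K.neg_mem hKm) (hVK _ hsecond))
        have h4 : X (Sum.inl j0.succ : SpIdx m) * (X (Sum.inr j : SpIdx m) * f)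
            = X (Sum.inr j0 : SpIdx m) * (DX a j f)
              - (-(X (Sum.inl j0.succ : SpIdx m) * (X (Sum.inr j : SpIdx m) * f))
                + X (Sum.inr j0 : SpIdx m) * (DX a j f)) := by abel
        rw [h4]
        exact V.sub_mem hsecond hVsum
      intro f hf
      have h1 := hdXp j0 _ (hxyc f hf)
      have hcomp : pderiv (Sum.inl j0.succ : SpIdx m)
          (X (Sum.inl j0.succ : SpIdx m) * (X (Sum.inr j : SpIdx m) * f))
          = X (Sum.inr j : SpIdx m) * f
            + X (Sum.inl j0.succ : SpIdx m) * (X (Sum.inr j : SpIdx m)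
              * pderiv (Sum.inl j0.succ : SpIdx m) f) := by
        rw [pderiv_mul, pderiv_mul, pderiv_X_self,
          pderiv_X_of_ne (by simp : (Sum.inr j : SpIdx m) ≠ Sum.inl j0.succ),
          one_mul, zero_mul, zero_add]
      rw [hcomp] at h1
      have hjunk := hxyc _ (hdXp j0 f hf)
      have h4 : X (Sum.inr j : SpIdx m) * f
          = (X (Sum.inr j : SpIdx m) * f
            + X (Sum.inl j0.succ : SpIdx m) * (X (Sum.inr j : SpIdx m)
              * pderiv (Sum.inl j0.succ : SpIdx m) f))
            - X (Sum.inl j0.succ : SpIdx m) * (X (Sum.inr j : SpIdx m)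
              * pderiv (Sum.inl j0.succ : SpIdx m) f) := by abel
      rw [h4]
      exact V.sub_mem h1 hjunk
    -- CV7 : multiplication by any y_j
    have hmyAll : ∀ (j : Fin m), ∀ f, f ∈ V → X (Sum.inr j : SpIdx m) * f ∈ V := by
      intro j f hf
      by_cases hj : (j : ℕ) < m1
      · exact hmy1 j hj f hf
      · by_cases hj2 : (j : ℕ) < m2
        · exact hmy12 j (by omega) hj2 f hf
        · exact hmy2 j (by omega) f hf
    -- CV8 : multiplication by any x_r
    have hmxAll : ∀ (r : Fin m), ∀ f, f ∈ V → X (Sum.inl r.succ : SpIdx m) * f ∈ V := by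
      intro r
      by_cases hr : (r : ℕ) < m1
      · exact hmx1 r hr
      · have hr1 : ¬ ((r : ℕ) < m1) := hr
        suffices h : ∀ n : ℕ, ∀ f, f ∈ V → degreeOf (Sum.inr j0 : SpIdx m) f ≤ n →
            X (Sum.inl r.succ : SpIdx m) * f ∈ V from fun f hf => h _ f hf le_rfl
        have hkey : ∀ f, f ∈ V → X (Sum.inl r.succ : SpIdx m) * (DY b j0 f) ∈ V := by
          intro f hf
          have hT := hW (FoA F m m1 m2 a b r j0 + FoA F m m1 m2 a b j0 r)
            (Or.inr (Or.inl ⟨r, j0, rfl⟩)) f (hVW f hf)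
          have hsecond : FoA F m m1 m2 a b j0 r f ∈ V := by
            by_cases hr2 : (r : ℕ) < m2
            · have hval2 : FoA F m m1 m2 a b j0 r f = DX a j0 (DY b r f) := by
                simp only [FoA, if_pos hj0m1, if_pos hr2, Module.End.mul_apply,
                  dxs_apply, dys_apply]
              rw [hval2]
              exact hdXj0 _ (hdY r hr2 f hf)
            · have hval2 : FoA F m m1 m2 a b j0 r f
                  = -(X (Sum.inr r : SpIdx m) * (DX a j0 f)) := by
                simp only [FoA, if_pos hj0m1, if_neg hr2, LinearMap.neg_apply,
                  Module.End.mul_apply, my_apply, dxs_apply]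
              rw [hval2]
              exact V.neg_mem (hmy2 r (by omega) _ (hdXj0 f hf))
          have hval : (FoA F m m1 m2 a b r j0 + FoA F m m1 m2 a b j0 r) f
              = X (Sum.inl r.succ : SpIdx m) * (DY b j0 f)
                + FoA F m m1 m2 a b j0 r f := by
            simp only [FoA, if_neg hr1, if_pos hj0m2, LinearMap.add_apply,
              Module.End.mul_apply, mx_apply, dys_apply]
          rw [hval] at hT
          have hKm : X (Sum.inl r.succ : SpIdx m) * (DY b j0 f) ∈ K :=
            X_mul_mem_freeOf (inl_succ_ne_zero r) (DY_mem_freeOf (hVK f hf))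
          have hVsum : X (Sum.inl r.succ : SpIdx m) * (DY b j0 f)
              + FoA F m m1 m2 a b j0 r f ∈ V :=
            hmkV _ hT (K.add_mem hKm (hVK _ hsecond))
          have h4 : X (Sum.inl r.succ : SpIdx m) * (DY b j0 f)
              = (X (Sum.inl r.succ : SpIdx m) * (DY b j0 f)
                + FoA F m m1 m2 a b j0 r f) - FoA F m m1 m2 a b j0 r f := by abel
          rw [h4]
          exact V.sub_mem hVsum hsecond
        have hexp : ∀ f : MvPolynomial (SpIdx m) F,
            X (Sum.inl r.succ : SpIdx m) * (DY b j0 f)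
            = X (Sum.inl r.succ : SpIdx m) * pderiv (Sum.inr j0 : SpIdx m) f
              + b j0 • (X (Sum.inl r.succ : SpIdx m) * f) := by
          intro f
          rw [show DY b j0 f = pderiv (Sum.inr j0 : SpIdx m) f + b j0 • f from rfl,
            mul_add, mul_smul_comm]
        intro n
        induction n with
        | zero =>
          intro f hf hdeg
          have hp : pderiv (Sum.inr j0 : SpIdx m) f = 0 :=
            pderiv_eq_zero_of_degreeOf_zero (Nat.le_zero.mp hdeg)
          have h1 := hkey f hf
          rw [hexp f, hp, mul_zero, zero_add] at h1
          have h3 : X (Sum.inl r.succ : SpIdx m) * f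
              = (b j0)⁻¹ • (b j0 • (X (Sum.inl r.succ : SpIdx m) * f)) := by
            rw [smul_smul, inv_mul_cancel₀ hbj0, one_smul]
          rw [h3]
          exact V.smul_mem _ h1
        | succ n ih =>
          intro f hf hdeg
          have h1 := hkey f hf
          rw [hexp f] at h1
          have hfirst : X (Sum.inl r.succ : SpIdx m)
              * pderiv (Sum.inr j0 : SpIdx m) f ∈ V := by
            by_cases hp : pderiv (Sum.inr j0 : SpIdx m) f = 0
            · rw [hp, mul_zero]; exact V.zero_mem
            · have hne : degreeOf (Sum.inr j0 : SpIdx m) f ≠ 0 :=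
                fun h => hp (pderiv_eq_zero_of_degreeOf_zero h)
              have hlt := degreeOf_pderiv_lt (F := F) hne
              exact ih _ (hdYp j0 hj0m2 f hf) (by omega)
          have h4 : b j0 • (X (Sum.inl r.succ : SpIdx m) * f)
              = (X (Sum.inl r.succ : SpIdx m) * pderiv (Sum.inr j0 : SpIdx m) f
                + b j0 • (X (Sum.inl r.succ : SpIdx m) * f))
                - X (Sum.inl r.succ : SpIdx m) * pderiv (Sum.inr j0 : SpIdx m) f := by abel
          have h5 : b j0 • (X (Sum.inl r.succ : SpIdx m) * f) ∈ V := by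
            rw [h4]; exact V.sub_mem h1 hfirst
          have h3 : X (Sum.inl r.succ : SpIdx m) * f
              = (b j0)⁻¹ • (b j0 • (X (Sum.inl r.succ : SpIdx m) * f)) := by
            rw [smul_smul, inv_mul_cancel₀ hbj0, one_smul]
          rw [h3]
          exact V.smul_mem _ h5
    -- all plain derivatives preserve V
    have hdAll : ∀ z : SpIdx m, ∀ f, f ∈ V → pderiv z f ∈ V := by
      intro z f hf
      rcases z with i | j
      · by_cases hi0 : i = 0
        · rw [hi0, hVd0 f hf]; exact V.zero_mem
        · obtain ⟨i', rfl⟩ := Fin.eq_succ_of_ne_zero hi0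
          exact hdXp i' f hf
      · exact hdYpAll j f hf
    -- all variable multiplications preserve V
    have hXAll : ∀ z : SpIdx m, z ≠ Sum.inl 0 → ∀ f, f ∈ V → X z * f ∈ V := by
      intro z hz f hf
      rcases z with i | j
      · have hi0 : i ≠ 0 := fun h => hz (by rw [h])
        obtain ⟨i', rfl⟩ := Fin.eq_succ_of_ne_zero hi0
        exact hmxAll i' f hf
      · exact hmyAll j f hf
    -- 1 ∈ V
    have h1V : (1 : MvPolynomial (SpIdx m) F) ∈ V := by
      obtain ⟨g, hgV, hg0⟩ := hVnz
      suffices h : ∀ n : ℕ, ∀ g, g ∈ V → g ≠ 0 → totalDegree g ≤ n →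
          (1 : MvPolynomial (SpIdx m) F) ∈ V from h _ g hgV hg0 le_rfl
      intro n
      induction n with
      | zero =>
        intro g hgV hg0 hdeg
        by_cases hc : ∀ z : SpIdx m, pderiv z g = 0
        · obtain ⟨c0, hC⟩ : ∃ c0, g = C c0 := ⟨_, eq_C_of_pderiv_eq_zero hc⟩
          have hc0 : c0 ≠ 0 := by
            intro h0; apply hg0; rw [hC, h0, map_zero]
          have h1 : (1 : MvPolynomial (SpIdx m) F) = c0⁻¹ • g := by
            rw [hC, smul_eq_C_mul, ← C_mul, inv_mul_cancel₀ hc0, C_1]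
          rw [h1]; exact V.smul_mem _ hgV
        · push_neg at hc
          obtain ⟨z, hz⟩ := hc
          have h2 := totalDegree_pderiv_lt (F := F) hz
          exact absurd hdeg (by omega)
      | succ n ih =>
        intro g hgV hg0 hdeg
        by_cases hc : ∀ z : SpIdx m, pderiv z g = 0
        · obtain ⟨c0, hC⟩ : ∃ c0, g = C c0 := ⟨_, eq_C_of_pderiv_eq_zero hc⟩
          have hc0 : c0 ≠ 0 := by
            intro h0; apply hg0; rw [hC, h0, map_zero]
          have h1 : (1 : MvPolynomial (SpIdx m) F) = c0⁻¹ • g := by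
            rw [hC, smul_eq_C_mul, ← C_mul, inv_mul_cancel₀ hc0, C_1]
          rw [h1]; exact V.smul_mem _ hgV
        · push_neg at hc
          obtain ⟨z, hz⟩ := hc
          have h2 := totalDegree_pderiv_lt (F := F) hz
          exact ih _ (hdAll z g hgV) hz (by omega)
    -- every x0-free monomial lies in V
    have hmonoV : ∀ d : SpIdx m →₀ ℕ, d (Sum.inl 0) = 0 →
        (monomial d (1 : F) : MvPolynomial (SpIdx m) F) ∈ V := by
      intro d
      induction d using Finsupp.induction with
      | zero =>
        intro _
        have : (monomial (0 : SpIdx m →₀ ℕ) (1 : F) : MvPolynomial (SpIdx m) F) = 1 := by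
          rw [monomial_zero']; exact C_1
        rw [this]; exact h1V
      | single_add z n d hzd hn ih =>
        intro hd0
        have h00 : (Finsupp.single z n) (Sum.inl 0) + d (Sum.inl 0) = 0 := by
          rw [← Finsupp.add_apply]; exact hd0
        have hd2 : d (Sum.inl 0) = 0 := by omega
        have hs2 : (Finsupp.single z n) (Sum.inl 0) = 0 := by omega
        have hzne : z ≠ Sum.inl 0 := by
          intro h; subst h
          rw [Finsupp.single_eq_same] at hs2
          exact hn hs2
        have hpow : ∀ (k : ℕ) (u : MvPolynomial (SpIdx m) F), u ∈ V →
            X z ^ k * u ∈ V := by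
          intro k
          induction k with
          | zero => intro u hu; rw [pow_zero, one_mul]; exact hu
          | succ k ihk =>
            intro u hu
            have : X z ^ (k+1) * u = X z ^ k * (X z * u) := by
              rw [pow_succ, mul_assoc]
            rw [this]
            exact ihk _ (hXAll z hzne u hu)
        rw [monomial_single_add]
        exact hpow n _ (ih hd2)
    -- K ⊆ W
    have hKW : ∀ g, g ∈ K → g ∈ W := by
      intro g hg
      have hsum := (as_sum g).symm
      rw [← hsum]
      refine W.sum_mem ?_
      intro d hd
      have hd0 : d (Sum.inl 0) = 0 := by
        by_contra hne
        exact (MvPolynomial.mem_support_iff.mp hd) (hg d hne)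
      have : (monomial d (coeff d g) : MvPolynomial (SpIdx m) F)
          = coeff d g • monomial d (1 : F) := by
        rw [smul_monomial, smul_eq_mul, mul_one]
      rw [this]
      exact W.smul_mem _ (hVW _ (hmonoV d hd0))
    -- surjectivity of the twisted derivative DY_{j0} on K
    have hsurj : ∀ g, g ∈ K → ∃ h, h ∈ K ∧ DY b j0 h = g := by
      suffices hs : ∀ n : ℕ, ∀ g, g ∈ K → degreeOf (Sum.inr j0 : SpIdx m) g ≤ n →
          ∃ h, h ∈ K ∧ DY b j0 h = g from fun g hg => hs _ g hg le_rfl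
      intro n
      induction n with
      | zero =>
        intro g hg hdeg
        have hp : pderiv (Sum.inr j0 : SpIdx m) g = 0 :=
          pderiv_eq_zero_of_degreeOf_zero (Nat.le_zero.mp hdeg)
        refine ⟨(b j0)⁻¹ • g, K.smul_mem _ hg, ?_⟩
        rw [DY_smul, show DY b j0 g = pderiv (Sum.inr j0 : SpIdx m) g + b j0 • g from rfl,
          hp, zero_add, smul_smul, inv_mul_cancel₀ hbj0, one_smul]
      | succ n ih =>
        intro g hg hdeg
        by_cases hp : pderiv (Sum.inr j0 : SpIdx m) g = 0
        · refine ⟨(b j0)⁻¹ • g, K.smul_mem _ hg, ?_⟩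
          rw [DY_smul, show DY b j0 g = pderiv (Sum.inr j0 : SpIdx m) g + b j0 • g from rfl,
            hp, zero_add, smul_smul, inv_mul_cancel₀ hbj0, one_smul]
        · have hne : degreeOf (Sum.inr j0 : SpIdx m) g ≠ 0 :=
            fun h => hp (pderiv_eq_zero_of_degreeOf_zero h)
          have hlt := degreeOf_pderiv_lt (F := F) hne
          obtain ⟨h₁, hh₁K, hh₁⟩ := ih (pderiv (Sum.inr j0 : SpIdx m) g)
            (pderiv_mem_freeOf hg) (by omega)
          refine ⟨(b j0)⁻¹ • (g - h₁), K.smul_mem _ (K.sub_mem hg hh₁K), ?_⟩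
          rw [DY_smul, DY_sub, hh₁,
            show DY b j0 g = pderiv (Sum.inr j0 : SpIdx m) g + b j0 • g from rfl]
          rw [show pderiv (Sum.inr j0 : SpIdx m) g + b j0 • g
              - pderiv (Sum.inr j0 : SpIdx m) g = b j0 • g from by abel,
            smul_smul, inv_mul_cancel₀ hbj0, one_smul]
    -- Phase E : x0-powers times K lie in W
    have hQ : ∀ k : ℕ, ∀ u, u ∈ K → (X (Sum.inl 0 : SpIdx m)) ^ k * u ∈ W := by
      intro k
      induction k with
      | zero =>
        intro u hu
        rw [pow_zero, one_mul]
        exact hKW u hu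
      | succ k ih =>
        intro u hu
        obtain ⟨h, hhK, hh⟩ := hsurj u hu
        have hXkh : (X (Sum.inl 0 : SpIdx m)) ^ k * h ∈ W := ih h hhK
        have hT := hW (ZspA F m m1 m2 a b c j0)
          (Or.inr (Or.inr (Or.inr (Or.inr (Or.inr (Or.inr (Or.inr (Or.inr
            (Or.inl ⟨j0, rfl⟩)))))))))
          _ hXkh
        have hval : ZspA F m m1 m2 a b c j0 ((X (Sum.inl 0 : SpIdx m)) ^ k * h)
            = (X (Sum.inl 0 : SpIdx m)) ^ (k+1) * u
              + (X (Sum.inl 0 : SpIdx m)) ^ k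
                * (DtSpA F m m1 m2 a b (DX a j0 h)
                  + ((k : F) + ct F m m1 m2 c - 1) • DX a j0 h) := by
          simp only [ZspA, if_pos hj0m1, LinearMap.add_apply, Module.End.mul_apply,
            LinearMap.smul_apply, Module.End.one_apply, mx_apply, dys_apply, dxs_apply]
          rw [DY_X0pow, hh, DX_X0pow, DtSpA_X0pow m1 m2 a b k (DX_mem_freeOf hhK)]
          simp only [smul_eq_C_mul, map_add, map_sub, map_one]
          ring
        rw [hval] at hT
        have hjunk : (X (Sum.inl 0 : SpIdx m)) ^ k
            * (DtSpA F m m1 m2 a b (DX a j0 h)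
              + ((k : F) + ct F m m1 m2 c - 1) • DX a j0 h) ∈ W :=
          ih _ (K.add_mem (DtSpA_mem_freeOf m1 m2 a b (DX_mem_freeOf hhK))
            (K.smul_mem _ (DX_mem_freeOf hhK)))
        have hrw : (X (Sum.inl 0 : SpIdx m)) ^ (k+1) * u
            = ((X (Sum.inl 0 : SpIdx m)) ^ (k+1) * u
              + (X (Sum.inl 0 : SpIdx m)) ^ k
                * (DtSpA F m m1 m2 a b (DX a j0 h)
                  + ((k : F) + ct F m m1 m2 c - 1) • DX a j0 h))
              - (X (Sum.inl 0 : SpIdx m)) ^ k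
                * (DtSpA F m m1 m2 a b (DX a j0 h)
                  + ((k : F) + ct F m m1 m2 c - 1) • DX a j0 h) := by abel
        rw [hrw]
        exact W.sub_mem hT hjunk
    -- conclusion : W = ⊤
    rw [Submodule.eq_top_iff']
    intro f
    have hsum : (∑ v ∈ f.support, (monomial v (coeff v f) : MvPolynomial (SpIdx m) F)) ∈ W := by
      refine W.sum_mem ?_
      intro d _
      have hsplit : Finsupp.single (Sum.inl 0 : SpIdx m) (d (Sum.inl 0))
          + Finsupp.erase (Sum.inl 0) d = d := Finsupp.single_add_erase _ _
      have hmono : (monomial d (coeff d f) : MvPolynomial (SpIdx m) F)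
          = (X (Sum.inl 0 : SpIdx m)) ^ (d (Sum.inl 0))
            * monomial (Finsupp.erase (Sum.inl 0) d) (coeff d f) := by
        conv_lhs => rw [← hsplit]
        rw [monomial_single_add, hsplit]
      rw [hmono]
      exact hQ _ _ (monomial_mem_freeOf (Finsupp.erase_same) _)
    rwa [← as_sum f] at hsum
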